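/- arXiv:2510.10724 — 6 statements merged into one kernel-verified Lean document; each statement's English description precedes it below -/
import Mathlib

section
/- For all integers p, q ≥ 1, the kernel K₀(x,y) = (1/((p-1)!(q-1)!)) ∫₀¹ τ^(p-1)(1-τ)^(q-1) e^{τx+(1-τ)y} dτ is totally negative of order 2: for all x₁ ≤ x₂ and y₁ ≤ y₂, K₀(x₁,y₁)·K₀(x₂,y₂) ≤ K₀(x₁,y₂)·K₀(x₂,y₁). -/
open MeasureTheory Real Filter Finset Asymptotics

/-- Divided difference of the exponential at nodes `x 0, …, x n`
(Hermite–Genocchi iterated-integral form, valid for repeated nodes). -/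
noncomputable def expDD {n : ℕ} (x : Fin (n + 1) → ℝ) : ℝ :=
  ∫ t in {t : Fin n → ℝ | (∀ i, 0 ≤ t i ∧ t i ≤ 1) ∧ ∀ i j : Fin n, i ≤ j → t j ≤ t i},
    Real.exp (x 0 + ∑ i : Fin n, t i * (x i.succ - x i.castSucc))

/-- Node tuple `a 0 ≤ … ≤ a (n-1)` followed by `x` with multiplicity `p+1`
and `y` with multiplicity `q+1`. -/
noncomputable def nodesPQ (n p q : ℕ) (a : Fin n → ℝ) (x y : ℝ) :
    Fin (n + (p + 1) + (q + 1)) → ℝ := fun i =>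
  if h : (i : ℕ) < n then a ⟨i, h⟩ else if (i : ℕ) < n + (p + 1) then x else y

/-- `Kₙ(x,y) = exp[a₁,…,aₙ, x^(p+1), y^(q+1)]`. -/
noncomputable def Kn (n p q : ℕ) (a : Fin n → ℝ) (x y : ℝ) : ℝ :=
  expDD (nodesPQ n p q a x y)

/-- Beta-weighted integral form of `exp[x^(p+1), y^(q+1)]`. -/
noncomputable def K0int (p q : ℕ) (x y : ℝ) : ℝ :=
  (1 / ((Nat.factorial p : ℝ) * (Nat.factorial q : ℝ))) *
    ∫ τ in (0:ℝ)..1, τ ^ p * (1 - τ) ^ q * Real.exp (τ * x + (1 - τ) * y)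

/-- First divided difference of the exponential. -/
noncomputable def dd1 (x y : ℝ) : ℝ :=
  if x = y then Real.exp x else (Real.exp x - Real.exp y) / (x - y)

/-- `h(x,y) = eˣ + eʸ − 2·exp[x,y]`. -/
noncomputable def hxy (x y : ℝ) : ℝ := Real.exp x + Real.exp y - 2 * dd1 x y

/-- `φ(u) = cosh u − sinh u / u`, with `φ(0)=0`. -/
noncomputable def phi (u : ℝ) : ℝ :=
  if u = 0 then 0 else Real.cosh u - Real.sinh u / u

/-- Lower incomplete gamma `γ(n,z) = ∫₀ᶻ t^(n-1) e^(−t) dt` (oriented integral). -/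
noncomputable def lowerGamma (n : ℕ) (z : ℝ) : ℝ :=
  ∫ t in (0:ℝ)..z, t ^ (n - 1) * Real.exp (-t)

/-- Sum of the `k` largest coordinates of `y`. -/
noncomputable def topSum {m : ℕ} (k : ℕ) (y : Fin m → ℝ) : ℝ :=
  sSup {t : ℝ | ∃ S : Finset (Fin m), S.card = k ∧ t = ∑ i ∈ S, y i}

/-- `e^{−t[x₀,…,x_m]}`: the divided difference of `s ↦ e^{−t s}` at the nodes `x`. -/
noncomputable def ddExpNeg (t : ℝ) {m : ℕ} (x : Fin (m + 1) → ℝ) : ℝ :=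
  (-t) ^ m * expDD fun i => -t * x i


noncomputable def Ffun (p q : ℕ) (u : ℝ) : ℝ :=
  ∫ τ in (0:ℝ)..1, τ ^ p * (1 - τ) ^ q * Real.exp (τ * u)

lemma cont1 (p q : ℕ) (u : ℝ) :
    Continuous (fun τ : ℝ => τ ^ p * (1 - τ) ^ q * Real.exp (τ * u)) := by
  continuity

lemma intg1 (p q : ℕ) (u : ℝ) :
    IntervalIntegrable (fun τ : ℝ => τ ^ p * (1 - τ) ^ q * Real.exp (τ * u)) volume 0 1 :=
  (cont1 p q u).intervalIntegrable 0 1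

lemma inner_eval (p q : ℕ) (σ b c : ℝ) :
    (∫ τ in (0:ℝ)..1, σ ^ p * (1 - σ) ^ q * (τ ^ p * (1 - τ) ^ q) *
        (Real.exp (σ * b + τ * c) + Real.exp (σ * c + τ * b)))
      = σ ^ p * (1 - σ) ^ q *
        (Real.exp (σ * b) * Ffun p q c + Real.exp (σ * c) * Ffun p q b) := by
  have hfun : ∀ τ : ℝ, σ ^ p * (1 - σ) ^ q * (τ ^ p * (1 - τ) ^ q) *
      (Real.exp (σ * b + τ * c) + Real.exp (σ * c + τ * b))
      = (σ ^ p * (1 - σ) ^ q * Real.exp (σ * b)) * (τ ^ p * (1 - τ) ^ q * Real.exp (τ * c))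
        + (σ ^ p * (1 - σ) ^ q * Real.exp (σ * c)) * (τ ^ p * (1 - τ) ^ q * Real.exp (τ * b)) := by
    intro τ
    rw [Real.exp_add, Real.exp_add]; ring
  rw [intervalIntegral.integral_congr (g := fun τ => (σ ^ p * (1 - σ) ^ q * Real.exp (σ * b)) * (τ ^ p * (1 - τ) ^ q * Real.exp (τ * c))
        + (σ ^ p * (1 - σ) ^ q * Real.exp (σ * c)) * (τ ^ p * (1 - τ) ^ q * Real.exp (τ * b))) (fun τ _ => hfun τ),
    intervalIntegral.integral_add ((intg1 p q c).const_mul _) ((intg1 p q b).const_mul _),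
    intervalIntegral.integral_const_mul, intervalIntegral.integral_const_mul]
  unfold Ffun; ring

lemma exp_pt (a B C σ τ : ℝ) (hB : 0 ≤ B) (hC : 0 ≤ C) :
    Real.exp (σ * (a + B) + τ * (a + C)) + Real.exp (σ * (a + C) + τ * (a + B))
      ≤ Real.exp (σ * a + τ * (a + B + C)) + Real.exp (σ * (a + B + C) + τ * a) := by
  have hsign : 0 ≤ (Real.exp (σ * B) - Real.exp (τ * B)) * (Real.exp (σ * C) - Real.exp (τ * C)) := by
    rcases le_total τ σ with h | h
    · exact mul_nonneg (by simp [Real.exp_le_exp]; nlinarith) (by simp [Real.exp_le_exp]; nlinarith)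
    · exact mul_nonneg_of_nonpos_of_nonpos (by simp [Real.exp_le_exp]; nlinarith)
        (by simp [Real.exp_le_exp]; nlinarith)
  have e1 : Real.exp (σ * (a + B) + τ * (a + C))
      = Real.exp (σ * a + τ * a) * (Real.exp (σ * B) * Real.exp (τ * C)) := by
    rw [← Real.exp_add, ← Real.exp_add]; ring_nf
  have e2 : Real.exp (σ * (a + C) + τ * (a + B))
      = Real.exp (σ * a + τ * a) * (Real.exp (σ * C) * Real.exp (τ * B)) := by
    rw [← Real.exp_add, ← Real.exp_add]; ring_nf
  have e3 : Real.exp (σ * a + τ * (a + B + C))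
      = Real.exp (σ * a + τ * a) * (Real.exp (τ * B) * Real.exp (τ * C)) := by
    rw [← Real.exp_add, ← Real.exp_add]; ring_nf
  have e4 : Real.exp (σ * (a + B + C) + τ * a)
      = Real.exp (σ * a + τ * a) * (Real.exp (σ * B) * Real.exp (σ * C)) := by
    rw [← Real.exp_add, ← Real.exp_add]; ring_nf
  rw [e1, e2, e3, e4]
  nlinarith [mul_nonneg (Real.exp_pos (σ * a + τ * a)).le hsign]

/-- Key log-convexity-style inequality for `Ffun`. -/
lemma Ffun_key (p q : ℕ) (a B C : ℝ) (hB : 0 ≤ B) (hC : 0 ≤ C) :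
    Ffun p q (a + B) * Ffun p q (a + C) ≤ Ffun p q a * Ffun p q (a + B + C) := by
  set b := a + B with hb
  set c := a + C with hc
  set d := a + B + C with hd
  -- double integral comparison
  have mono : (∫ σ in (0:ℝ)..1, ∫ τ in (0:ℝ)..1,
        σ ^ p * (1 - σ) ^ q * (τ ^ p * (1 - τ) ^ q) *
          (Real.exp (σ * b + τ * c) + Real.exp (σ * c + τ * b)))
      ≤ (∫ σ in (0:ℝ)..1, ∫ τ in (0:ℝ)..1,
        σ ^ p * (1 - σ) ^ q * (τ ^ p * (1 - τ) ^ q) *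
          (Real.exp (σ * a + τ * d) + Real.exp (σ * d + τ * a))) := by
    apply intervalIntegral.integral_mono_on zero_le_one
    · have heq : (fun σ : ℝ => ∫ τ in (0:ℝ)..1,
          σ ^ p * (1 - σ) ^ q * (τ ^ p * (1 - τ) ^ q) *
            (Real.exp (σ * b + τ * c) + Real.exp (σ * c + τ * b)))
          = fun σ : ℝ => σ ^ p * (1 - σ) ^ q *
            (Real.exp (σ * b) * Ffun p q c + Real.exp (σ * c) * Ffun p q b) :=
        funext fun σ => inner_eval p q σ b c
      rw [heq]
      exact (by continuity : Continuous fun σ : ℝ => σ ^ p * (1 - σ) ^ q *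
        (Real.exp (σ * b) * Ffun p q c + Real.exp (σ * c) * Ffun p q b)).intervalIntegrable 0 1
    · have heq : (fun σ : ℝ => ∫ τ in (0:ℝ)..1,
          σ ^ p * (1 - σ) ^ q * (τ ^ p * (1 - τ) ^ q) *
            (Real.exp (σ * a + τ * d) + Real.exp (σ * d + τ * a)))
          = fun σ : ℝ => σ ^ p * (1 - σ) ^ q *
            (Real.exp (σ * a) * Ffun p q d + Real.exp (σ * d) * Ffun p q a) :=
        funext fun σ => inner_eval p q σ a d
      rw [heq]
      exact (by continuity : Continuous fun σ : ℝ => σ ^ p * (1 - σ) ^ q *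
        (Real.exp (σ * a) * Ffun p q d + Real.exp (σ * d) * Ffun p q a)).intervalIntegrable 0 1
    · intro σ hσ
      apply intervalIntegral.integral_mono_on zero_le_one
      · exact (by continuity : Continuous fun τ : ℝ => σ ^ p * (1 - σ) ^ q * (τ ^ p * (1 - τ) ^ q) *
          (Real.exp (σ * b + τ * c) + Real.exp (σ * c + τ * b))).intervalIntegrable 0 1
      · exact (by continuity : Continuous fun τ : ℝ => σ ^ p * (1 - σ) ^ q * (τ ^ p * (1 - τ) ^ q) *
          (Real.exp (σ * a + τ * d) + Real.exp (σ * d + τ * a))).intervalIntegrable 0 1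
      · intro τ hτ
        have hfσ : 0 ≤ σ ^ p * (1 - σ) ^ q :=
          mul_nonneg (pow_nonneg hσ.1 p) (pow_nonneg (by linarith [hσ.2]) q)
        have hfτ : 0 ≤ τ ^ p * (1 - τ) ^ q :=
          mul_nonneg (pow_nonneg hτ.1 p) (pow_nonneg (by linarith [hτ.2]) q)
        have hexp := exp_pt a B C σ τ hB hC
        rw [← hb, ← hc, ← hd] at hexp
        exact mul_le_mul_of_nonneg_left hexp (mul_nonneg hfσ hfτ)
  -- evaluate both sides
  have lhs_eq : (∫ σ in (0:ℝ)..1, ∫ τ in (0:ℝ)..1,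
        σ ^ p * (1 - σ) ^ q * (τ ^ p * (1 - τ) ^ q) *
          (Real.exp (σ * b + τ * c) + Real.exp (σ * c + τ * b)))
      = Ffun p q b * Ffun p q c + Ffun p q c * Ffun p q b := by
    rw [show (fun σ : ℝ => ∫ τ in (0:ℝ)..1,
          σ ^ p * (1 - σ) ^ q * (τ ^ p * (1 - τ) ^ q) *
            (Real.exp (σ * b + τ * c) + Real.exp (σ * c + τ * b)))
        = fun σ : ℝ => (σ ^ p * (1 - σ) ^ q * Real.exp (σ * b)) * Ffun p q c
            + (σ ^ p * (1 - σ) ^ q * Real.exp (σ * c)) * Ffun p q b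
      from funext fun σ => by rw [inner_eval p q σ b c]; ring,
      intervalIntegral.integral_add ((intg1 p q b).mul_const _) ((intg1 p q c).mul_const _),
      intervalIntegral.integral_mul_const, intervalIntegral.integral_mul_const]
    rfl
  have rhs_eq : (∫ σ in (0:ℝ)..1, ∫ τ in (0:ℝ)..1,
        σ ^ p * (1 - σ) ^ q * (τ ^ p * (1 - τ) ^ q) *
          (Real.exp (σ * a + τ * d) + Real.exp (σ * d + τ * a)))
      = Ffun p q a * Ffun p q d + Ffun p q d * Ffun p q a := by
    rw [show (fun σ : ℝ => ∫ τ in (0:ℝ)..1,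
          σ ^ p * (1 - σ) ^ q * (τ ^ p * (1 - τ) ^ q) *
            (Real.exp (σ * a + τ * d) + Real.exp (σ * d + τ * a)))
        = fun σ : ℝ => (σ ^ p * (1 - σ) ^ q * Real.exp (σ * a)) * Ffun p q d
            + (σ ^ p * (1 - σ) ^ q * Real.exp (σ * d)) * Ffun p q a
      from funext fun σ => by rw [inner_eval p q σ a d]; ring,
      intervalIntegral.integral_add ((intg1 p q a).mul_const _) ((intg1 p q d).mul_const _),
      intervalIntegral.integral_mul_const, intervalIntegral.integral_mul_const]
    rfl
  rw [lhs_eq, rhs_eq] at mono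
  linarith

lemma K0int_eq (p q : ℕ) (x y : ℝ) :
    K0int p q x y = (1 / ((Nat.factorial p : ℝ) * (Nat.factorial q : ℝ))) *
      (Real.exp y * Ffun p q (x - y)) := by
  unfold K0int Ffun
  congr 1
  rw [← intervalIntegral.integral_const_mul]
  apply intervalIntegral.integral_congr
  intro τ _
  show τ ^ p * (1 - τ) ^ q * Real.exp (τ * x + (1 - τ) * y) = Real.exp y * (τ ^ p * (1 - τ) ^ q * Real.exp (τ * (x - y)))
  rw [show Real.exp y * (τ ^ p * (1 - τ) ^ q * Real.exp (τ * (x - y)))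
      = τ ^ p * (1 - τ) ^ q * (Real.exp y * Real.exp (τ * (x - y))) from by ring,
    ← Real.exp_add]
  ring_nf

theorem stmt2 (p q : ℕ) (x₁ x₂ y₁ y₂ : ℝ) (hx : x₁ ≤ x₂) (hy : y₁ ≤ y₂) :
    K0int p q x₁ y₁ * K0int p q x₂ y₂ ≤ K0int p q x₁ y₂ * K0int p q x₂ y₁ := by
  have key := Ffun_key p q (x₁ - y₂) (y₂ - y₁) (x₂ - x₁) (by linarith) (by linarith)
  rw [show x₁ - y₂ + (y₂ - y₁) = x₁ - y₁ from by ring,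
      show x₁ - y₂ + (x₂ - x₁) = x₂ - y₂ from by ring,
      show x₁ - y₁ + (x₂ - x₁) = x₂ - y₁ from by ring] at key
  rw [K0int_eq p q x₁ y₁, K0int_eq p q x₂ y₂, K0int_eq p q x₁ y₂, K0int_eq p q x₂ y₁]
  have h2 := mul_le_mul_of_nonneg_left key
    (show (0:ℝ) ≤ (1 / ((Nat.factorial p : ℝ) * (Nat.factorial q : ℝ)))^2 *
        (Real.exp y₁ * Real.exp y₂) from by positivity)
  nlinarith [h2]
end

section
/- Fix real nodes a₁ ≤ ⋯ ≤ aₙ and integers p, q ≥ 1, and set Kₙ(x,y) = exp[a₁,…,aₙ, x^(p), y^(q)]. Then Kₙ is supermodular: Kₙ(x₁,y₁) + Kₙ(x₂,y₂) ≥ Kₙ(x₁,y₂) + Kₙ(x₂,y₁) for all x₁ ≤ x₂ and y₁ ≤ y₂. -/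
open MeasureTheory Real Filter Finset Asymptotics

/-- The decreasing-simplex region. -/
def Sset (M : ℕ) : Set (Fin M → ℝ) :=
  {t : Fin M → ℝ | (∀ i, 0 ≤ t i ∧ t i ≤ 1) ∧ ∀ i j : Fin M, i ≤ j → t j ≤ t i}

/-- The exponent in the Hermite–Genocchi formula for `Kn`. -/
noncomputable def Fexp (n p q : ℕ) (a : Fin n → ℝ) (x y : ℝ)
    (t : Fin (n + (p + 1) + q) → ℝ) : ℝ :=
  nodesPQ n p q a x y (0 : Fin (n + (p + 1) + q + 1)) + ∑ i : Fin (n + (p + 1) + q),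
    t i * (nodesPQ n p q a x y i.succ - nodesPQ n p q a x y i.castSucc)

lemma Kn_eq (n p q : ℕ) (a : Fin n → ℝ) (x y : ℝ) :
    Kn n p q a x y = ∫ t in Sset (n + (p + 1) + q), Real.exp (Fexp n p q a x y t) := rfl

lemma Sset_compact (M : ℕ) : IsCompact (Sset M) := by
  have h2 : IsCompact (Set.pi Set.univ fun _ : Fin M => Set.Icc (0:ℝ) 1) :=
    isCompact_univ_pi fun _ => isCompact_Icc
  refine h2.of_isClosed_subset ?_ (fun t ht i _ => ⟨(ht.1 i).1, (ht.1 i).2⟩)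
  have hEq : Sset M = (⋂ i, {t : Fin M → ℝ | 0 ≤ t i} ∩ {t | t i ≤ 1}) ∩
      ⋂ i, ⋂ j, ⋂ (_ : i ≤ j), {t : Fin M → ℝ | t j ≤ t i} := by
    ext t
    simp only [Sset, Set.mem_setOf_eq, Set.mem_inter_iff, Set.mem_iInter]
  rw [hEq]
  exact (isClosed_iInter fun i =>
      (isClosed_le continuous_const (continuous_apply i)).inter
        (isClosed_le (continuous_apply i) continuous_const)).inter
    (isClosed_iInter fun i => isClosed_iInter fun j => isClosed_iInter fun _ =>
      isClosed_le (continuous_apply j) (continuous_apply i))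

lemma Fexp_continuous (n p q : ℕ) (a : Fin n → ℝ) (x y : ℝ) :
    Continuous (Fexp n p q a x y) := by
  unfold Fexp
  exact continuous_const.add (continuous_finset_sum _ fun i _ =>
    (continuous_apply i).mul continuous_const)

lemma Fexp_step (n p q : ℕ) (a : Fin n → ℝ) (x₂ y₂ x₁ y₁ : ℝ)
    (t : Fin (n + (p + 1) + q) → ℝ) :
    Fexp n p q a x₂ y₂ t - Fexp n p q a x₁ y₁ t
      = (nodesPQ n p q a x₂ y₂ (0 : Fin (n + (p + 1) + q + 1))
          - nodesPQ n p q a x₁ y₁ (0 : Fin (n + (p + 1) + q + 1)))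
        + ∑ i : Fin (n + (p + 1) + q),
          t i * ((nodesPQ n p q a x₂ y₂ i.succ - nodesPQ n p q a x₁ y₁ i.succ)
            - (nodesPQ n p q a x₂ y₂ i.castSucc - nodesPQ n p q a x₁ y₁ i.castSucc)) := by
  unfold Fexp
  rw [add_sub_add_comm]
  congr 1
  rw [← Finset.sum_sub_distrib]
  exact Finset.sum_congr rfl fun i _ => by ring

lemma Fexp_sub_y (n p q : ℕ) (a : Fin n → ℝ) (x y₁ y₂ : ℝ)
    (t : Fin (n + (p + 1) + q) → ℝ) :
    Fexp n p q a x y₂ t - Fexp n p q a x y₁ t = t ⟨n + p, by omega⟩ * (y₂ - y₁) := by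
  have hd : ∀ j : Fin (n + (p + 1) + q + 1),
      nodesPQ n p q a x y₂ j - nodesPQ n p q a x y₁ j
        = if n + (p + 1) ≤ (j : ℕ) then y₂ - y₁ else 0 := by
    intro j
    unfold nodesPQ
    rcases lt_or_ge (j : ℕ) n with h | h
    · rw [dif_pos h, dif_pos h, if_neg (by omega)]; ring
    · rw [dif_neg (by omega), dif_neg (by omega)]
      by_cases h2 : (j : ℕ) < n + (p + 1)
      · rw [if_pos h2, if_pos h2, if_neg (by omega)]; try ring
      · rw [if_neg h2, if_neg h2, if_pos (by omega)]; try ring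
  rw [Fexp_step]
  simp only [hd]
  rw [Fin.val_zero, if_neg (by omega)]
  have hterm : ∀ i : Fin (n + (p + 1) + q),
      t i * ((if n + (p + 1) ≤ ((i.succ : Fin (n + (p + 1) + q + 1)) : ℕ) then y₂ - y₁ else 0)
        - (if n + (p + 1) ≤ ((i.castSucc : Fin (n + (p + 1) + q + 1)) : ℕ) then y₂ - y₁ else 0))
      = if i = (⟨n + p, by omega⟩ : Fin (n + (p + 1) + q)) then t i * (y₂ - y₁) else 0 := by
    intro i
    rw [Fin.val_succ, Fin.coe_castSucc]
    by_cases hi : (i : ℕ) = n + p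
    · rw [if_pos (by omega), if_neg (by omega), if_pos (Fin.ext hi)]; ring
    · rw [if_neg (fun h => hi (congrArg Fin.val h))]
      by_cases h2 : n + (p + 1) ≤ (i : ℕ)
      · rw [if_pos (by omega), if_pos h2]; ring
      · rw [if_neg (by omega), if_neg h2]; ring
  rw [Finset.sum_congr rfl fun i _ => hterm i, Finset.sum_ite_eq' Finset.univ,
    if_pos (Finset.mem_univ _)]
  ring

lemma Fexp_sub_x (n p q : ℕ) (a : Fin n → ℝ) (x₁ x₂ y : ℝ)
    (t : Fin (n + (p + 1) + q) → ℝ) :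
    Fexp n p q a x₂ y t - Fexp n p q a x₁ y t
      = ((if _ : 0 < n then t ⟨n - 1, by omega⟩ else 1) - t ⟨n + p, by omega⟩) * (x₂ - x₁) := by
  have hd : ∀ j : Fin (n + (p + 1) + q + 1),
      nodesPQ n p q a x₂ y j - nodesPQ n p q a x₁ y j
        = if n ≤ (j : ℕ) ∧ (j : ℕ) < n + (p + 1) then x₂ - x₁ else 0 := by
    intro j
    unfold nodesPQ
    rcases lt_or_ge (j : ℕ) n with h | h
    · rw [dif_pos h, dif_pos h, if_neg (by omega)]; ring
    · rw [dif_neg (by omega), dif_neg (by omega)]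
      by_cases h2 : (j : ℕ) < n + (p + 1)
      · rw [if_pos h2, if_pos h2, if_pos (by omega)]; try ring
      · rw [if_neg h2, if_neg h2, if_neg (by omega)]; try ring
  rw [Fexp_step]
  simp only [hd]
  rw [Fin.val_zero]
  rcases Nat.eq_zero_or_pos n with hn | hn
  · rw [if_pos (by omega), dif_neg (by omega)]
    have hterm : ∀ i : Fin (n + (p + 1) + q),
        t i * ((if n ≤ ((i.succ : Fin (n + (p + 1) + q + 1)) : ℕ) ∧
            ((i.succ : Fin (n + (p + 1) + q + 1)) : ℕ) < n + (p + 1) then x₂ - x₁ else 0)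
          - (if n ≤ ((i.castSucc : Fin (n + (p + 1) + q + 1)) : ℕ) ∧
            ((i.castSucc : Fin (n + (p + 1) + q + 1)) : ℕ) < n + (p + 1) then x₂ - x₁ else 0))
        = if i = (⟨n + p, by omega⟩ : Fin (n + (p + 1) + q)) then -(t i * (x₂ - x₁)) else 0 := by
      intro i
      rw [Fin.val_succ, Fin.coe_castSucc]
      by_cases hi : (i : ℕ) = n + p
      · rw [if_neg (by omega), if_pos (by omega), if_pos (Fin.ext hi)]; ring
      · rw [if_neg (fun h => hi (congrArg Fin.val h))]
        by_cases h2 : (i : ℕ) < n + (p + 1)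
        · rw [if_pos (by omega), if_pos (by omega)]; ring
        · rw [if_neg (by omega), if_neg (by omega)]; ring
    rw [Finset.sum_congr rfl fun i _ => hterm i, Finset.sum_ite_eq' Finset.univ,
      if_pos (Finset.mem_univ _)]
    ring
  · rw [if_neg (by omega), dif_pos hn]
    have hterm : ∀ i : Fin (n + (p + 1) + q),
        t i * ((if n ≤ ((i.succ : Fin (n + (p + 1) + q + 1)) : ℕ) ∧
            ((i.succ : Fin (n + (p + 1) + q + 1)) : ℕ) < n + (p + 1) then x₂ - x₁ else 0)
          - (if n ≤ ((i.castSucc : Fin (n + (p + 1) + q + 1)) : ℕ) ∧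
            ((i.castSucc : Fin (n + (p + 1) + q + 1)) : ℕ) < n + (p + 1) then x₂ - x₁ else 0))
        = (if i = (⟨n - 1, by omega⟩ : Fin (n + (p + 1) + q)) then t i * (x₂ - x₁) else 0)
          + (if i = (⟨n + p, by omega⟩ : Fin (n + (p + 1) + q)) then -(t i * (x₂ - x₁)) else 0) := by
      intro i
      rw [Fin.val_succ, Fin.coe_castSucc]
      by_cases hi1 : (i : ℕ) = n - 1
      · rw [if_pos (by omega), if_neg (by omega), if_pos (Fin.ext hi1),
          if_neg (fun h => by have := congrArg Fin.val h; simp at this; omega)]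
        ring
      · rw [if_neg (fun h => hi1 (congrArg Fin.val h))]
        by_cases hi2 : (i : ℕ) = n + p
        · rw [if_neg (by omega), if_pos (by omega), if_pos (Fin.ext hi2)]; ring
        · rw [if_neg (fun h => hi2 (congrArg Fin.val h))]
          by_cases h2 : n ≤ (i : ℕ) ∧ (i : ℕ) < n + (p + 1)
          · rw [if_pos (by omega), if_pos h2]; ring
          · rw [if_neg (by omega), if_neg h2]; ring
    rw [Finset.sum_congr rfl fun i _ => hterm i, Finset.sum_add_distrib,
      Finset.sum_ite_eq' Finset.univ, Finset.sum_ite_eq' Finset.univ,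
      if_pos (Finset.mem_univ _), if_pos (Finset.mem_univ _)]
    ring

theorem stmt5 (n p q : ℕ) (a : Fin n → ℝ) (ha : Monotone a)
    (x₁ x₂ y₁ y₂ : ℝ) (hx : x₁ ≤ x₂) (hy : y₁ ≤ y₂) :
    Kn n p q a x₁ y₂ + Kn n p q a x₂ y₁ ≤ Kn n p q a x₁ y₁ + Kn n p q a x₂ y₂ := by
  have hSc : IsCompact (Sset (n + (p + 1) + q)) := Sset_compact _
  have hSm : MeasurableSet (Sset (n + (p + 1) + q)) := hSc.isClosed.measurableSet
  have hint : ∀ x y : ℝ, IntegrableOn (fun t => Real.exp (Fexp n p q a x y t))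
      (Sset (n + (p + 1) + q)) := fun x y =>
    ((Real.continuous_exp.comp (Fexp_continuous n p q a x y)).continuousOn).integrableOn_compact hSc
  rw [Kn_eq, Kn_eq, Kn_eq, Kn_eq, ← integral_add (hint x₁ y₂) (hint x₂ y₁),
    ← integral_add (hint x₁ y₁) (hint x₂ y₂)]
  refine setIntegral_mono_on ((hint x₁ y₂).add (hint x₂ y₁)) ((hint x₁ y₁).add (hint x₂ y₂)) hSm ?_
  intro t ht
  obtain ⟨hbd, hmono⟩ := ht
  set v : ℝ := t ⟨n + p, by omega⟩ with hv
  set u : ℝ := (if _ : 0 < n then t ⟨n - 1, by omega⟩ else 1) - v with hu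
  have hD' : (0:ℝ) ≤ v * (y₂ - y₁) := mul_nonneg (hbd _).1 (sub_nonneg.2 hy)
  have hu0 : 0 ≤ u := by
    rw [hu]
    split_ifs with h
    · exact sub_nonneg.2 (hmono ⟨n - 1, by omega⟩ ⟨n + p, by omega⟩ (by simp [Fin.mk_le_mk]; omega))
    · exact sub_nonneg.2 (hbd _).2
  have hD : (0:ℝ) ≤ u * (x₂ - x₁) := mul_nonneg hu0 (sub_nonneg.2 hx)
  have e1 : Fexp n p q a x₂ y₁ t = Fexp n p q a x₁ y₁ t + u * (x₂ - x₁) := by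
    have := Fexp_sub_x n p q a x₁ x₂ y₁ t; rw [hu, hv]; linarith
  have e2 : Fexp n p q a x₁ y₂ t = Fexp n p q a x₁ y₁ t + v * (y₂ - y₁) := by
    have := Fexp_sub_y n p q a x₁ y₁ y₂ t; rw [hv]; linarith
  have e3 : Fexp n p q a x₂ y₂ t = Fexp n p q a x₁ y₁ t + u * (x₂ - x₁) + v * (y₂ - y₁) := by
    have h1 := Fexp_sub_x n p q a x₁ x₂ y₂ t
    have h2 := Fexp_sub_y n p q a x₁ y₁ y₂ t
    rw [hu, hv]; linarith
  simp only [e1, e2, e3]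
  set A := Fexp n p q a x₁ y₁ t
  set D := u * (x₂ - x₁)
  set D' := v * (y₂ - y₁)
  rw [Real.exp_add, Real.exp_add, Real.exp_add, Real.exp_add]
  have h1 : 1 ≤ Real.exp D := by rw [← Real.exp_zero]; exact Real.exp_le_exp.2 hD
  have h2 : 1 ≤ Real.exp D' := by rw [← Real.exp_zero]; exact Real.exp_le_exp.2 hD'
  nlinarith [Real.exp_pos A, mul_nonneg (mul_nonneg (Real.exp_pos A).le
    (sub_nonneg.2 h1)) (sub_nonneg.2 h2)]
end

section
/- For a ≤ b ≤ c, the function h(x,y) = e^x + e^y − 2·exp[x,y] satisfies the reverse triangle inequality h(a,c) ≥ h(a,b) + h(b,c). Moreover h(a,c) − h(a,b) − h(b,c) = 2(b−a)(c−b)·exp[a,b,b,c] ≥ 0. -/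
open MeasureTheory Real Filter Finset Asymptotics

/-!
With `p = b - a` and `q = c - b`, the Hermite–Genocchi integrand for the nodes `a, b, b, c` is
`exp (a + t₀ p + t₂ q)`, independent of `t₁`, so `exp[a,b,b,c]` is an iterated integral over the
ordered simplex `1 ≥ t₀ ≥ t₁ ≥ t₂ ≥ 0` that can be evaluated in closed form. This gives
`p q exp[a,b,b,c] = exp[a,b] + exp[b,c] - exp[a,c] - e^b`, which is half the defect
`h(a,c) - h(a,b) - h(b,c)`; the sign comes from the positivity of the integrand.
-/

namespace MeasureTheory

variable {α β E : Type*} [MeasurableSpace α] [MeasurableSpace β] [NormedAddCommGroup E]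
  [NormedSpace ℝ E] {μ : Measure α} {ν : Measure β} [SFinite μ] [SFinite ν]

theorem setIntegral_prod_fiberwise {s : Set α} {t : α → Set β} {f : α × β → E}
    (hs : MeasurableSet s) (hst : MeasurableSet {p : α × β | p.1 ∈ s ∧ p.2 ∈ t p.1})
    (hf : IntegrableOn f {p : α × β | p.1 ∈ s ∧ p.2 ∈ t p.1} (μ.prod ν)) :
    ∫ p in {p : α × β | p.1 ∈ s ∧ p.2 ∈ t p.1}, f p ∂μ.prod ν
      = ∫ x in s, ∫ y in t x, f (x, y) ∂ν ∂μ := by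
  rw [← integral_indicator hst, integral_prod _ ((integrable_indicator_iff hst).2 hf),
    ← integral_indicator hs]
  congr 1 with x
  by_cases hx : x ∈ s
  · have hsec : t x = Prod.mk x ⁻¹' {p : α × β | p.1 ∈ s ∧ p.2 ∈ t p.1} := by
      ext y; simp [hx]
    rw [Set.indicator_of_mem hx, hsec, ← integral_indicator (measurable_prodMk_left hst)]
    rfl
  · simp [Set.indicator, hx]

end MeasureTheory

open Set intervalIntegral

section Simplex

variable {E : Type*} [NormedAddCommGroup E] [NormedSpace ℝ E]

theorem setIntegral_Icc_eq_intervalIntegral {a b : ℝ} (hab : a ≤ b) (f : ℝ → E) :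
    ∫ x in Icc a b, f x = ∫ x in a..b, f x := by
  rw [integral_of_le hab, integral_Icc_eq_integral_Ioc]

def triangle (u : ℝ) : Set (ℝ × ℝ) := {q | q.1 ∈ Icc 0 u ∧ q.2 ∈ Icc 0 q.1}

theorem isCompact_triangle (u : ℝ) : IsCompact (triangle u) := by
  refine (isCompact_Icc (a := ((0 : ℝ), (0 : ℝ))) (b := (u, u))).of_isClosed_subset ?_ ?_
  · exact (isClosed_Icc.preimage continuous_fst).inter
      ((isClosed_le continuous_const continuous_snd).inter
        (isClosed_le continuous_snd continuous_fst))
  · rintro q ⟨⟨h0, hu⟩, h2, h21⟩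
    exact ⟨⟨h0, h2⟩, hu, h21.trans hu⟩

theorem setIntegral_triangle {g : ℝ × ℝ → E} (hg : Continuous g) {u : ℝ} (hu : 0 ≤ u) :
    ∫ q in triangle u, g q = ∫ t₁ in 0..u, ∫ t₂ in 0..t₁, g (t₁, t₂) := by
  rw [Measure.volume_eq_prod, triangle, setIntegral_prod_fiberwise measurableSet_Icc
    (isCompact_triangle u).isClosed.measurableSet
    (hg.continuousOn.integrableOn_compact (isCompact_triangle u)),
    setIntegral_Icc_eq_intervalIntegral hu]
  refine integral_congr fun t₁ ht₁ => ?_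
  rw [Set.uIcc_of_le hu] at ht₁
  exact setIntegral_Icc_eq_intervalIntegral ht₁.1 _

theorem setIntegral_simplex_three {g : ℝ × ℝ × ℝ → E} (hg : Continuous g) :
    ∫ p in {p : ℝ × ℝ × ℝ | p.1 ∈ Icc (0 : ℝ) 1 ∧ p.2 ∈ triangle p.1}, g p
      = ∫ t₀ in 0..1, ∫ t₁ in 0..t₀, ∫ t₂ in 0..t₁, g (t₀, t₁, t₂) := by
  have hcompact : IsCompact {p : ℝ × ℝ × ℝ | p.1 ∈ Icc (0 : ℝ) 1 ∧ p.2 ∈ triangle p.1} := by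
    refine (isCompact_Icc (a := ((0 : ℝ), (0 : ℝ), (0 : ℝ))) (b := (1, 1, 1))).of_isClosed_subset
      ?_ ?_
    · exact (isClosed_Icc.preimage continuous_fst).inter
        (((isClosed_le continuous_const continuous_snd.fst).inter
          (isClosed_le continuous_snd.fst continuous_fst)).inter
        ((isClosed_le continuous_const continuous_snd.snd).inter
          (isClosed_le continuous_snd.snd continuous_snd.fst)))
    · rintro p ⟨⟨h0, h1⟩, ⟨h10, h1le⟩, h20, h2le⟩
      exact ⟨⟨h0, h10, h20⟩, h1, h1le.trans h1, (h2le.trans h1le).trans h1⟩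
  rw [Measure.volume_eq_prod, setIntegral_prod_fiberwise measurableSet_Icc
    hcompact.isClosed.measurableSet (hg.continuousOn.integrableOn_compact hcompact),
    setIntegral_Icc_eq_intervalIntegral zero_le_one]
  refine integral_congr fun t₀ ht₀ => ?_
  rw [Set.uIcc_of_le zero_le_one] at ht₀
  exact setIntegral_triangle (by fun_prop) ht₀.1

end Simplex

def piFinThree : (Fin 3 → ℝ) ≃ᵐ ℝ × ℝ × ℝ :=
  (MeasurableEquiv.piFinSuccAbove (fun _ => ℝ) 0).trans
    ((MeasurableEquiv.refl ℝ).prodCongr MeasurableEquiv.finTwoArrow)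

theorem measurePreserving_piFinThree : MeasurePreserving piFinThree volume volume :=
  ((MeasurePreserving.id volume).prod (volume_preserving_finTwoArrow ℝ)).comp
    (volume_preserving_piFinSuccAbove (fun _ => ℝ) 0)

theorem piFinThree_symm_apply (p : ℝ × ℝ × ℝ) : piFinThree.symm p = ![p.1, p.2.1, p.2.2] := by
  ext i; fin_cases i <;> rfl

theorem piFinThree_symm_preimage_simplex :
    piFinThree.symm ⁻¹'
        {t : Fin 3 → ℝ | (∀ i, 0 ≤ t i ∧ t i ≤ 1) ∧ ∀ i j : Fin 3, i ≤ j → t j ≤ t i}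
      = {p : ℝ × ℝ × ℝ | p.1 ∈ Icc (0 : ℝ) 1 ∧ p.2 ∈ triangle p.1} := by
  ext ⟨t₀, t₁, t₂⟩
  simp only [Set.mem_preimage, Set.mem_ofPred_eq, piFinThree_symm_apply, Fin.forall_fin_succ,
    IsEmpty.forall_iff, Fin.succ_zero_eq_one, Fin.succ_one_eq_two, Matrix.cons_val,
    triangle, Set.mem_Icc]
  grind

theorem expDD_fin_four (x : Fin 4 → ℝ) :
    expDD x = ∫ t₀ in 0..1, ∫ t₁ in 0..t₀, ∫ t₂ in 0..t₁,
      exp (x 0 + t₀ * (x 1 - x 0) + t₁ * (x 2 - x 1) + t₂ * (x 3 - x 2)) := by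
  rw [expDD, ← (measurePreserving_piFinThree.symm piFinThree).setIntegral_preimage_emb
      piFinThree.symm.measurableEmbedding, piFinThree_symm_preimage_simplex]
  simp only [piFinThree_symm_apply, Fin.sum_univ_three]
  rw [setIntegral_simplex_three (by fun_prop)]
  simp [add_assoc]

section ExpIntegrals

variable {A k : ℝ}

theorem integral_exp_add_mul (hk : k ≠ 0) (t : ℝ) :
    ∫ s in 0..t, exp (A + s * k) = (exp (A + t * k) - exp A) / k := by
  have := integral_comp_mul_add (fun x => exp x) hk A (a := 0) (b := t)
  simp only [integral_exp, mul_zero, zero_add, smul_eq_mul] at this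
  simpa only [div_eq_inv_mul, mul_comm, add_comm] using this

theorem integral_integral_exp_add_mul (hk : k ≠ 0) (t : ℝ) :
    ∫ s in 0..t, ∫ r in 0..s, exp (A + r * k)
      = (exp (A + t * k) - exp A - k * (t * exp A)) / k ^ 2 := by
  simp_rw [integral_exp_add_mul hk]
  rw [intervalIntegral.integral_div, intervalIntegral.integral_sub
    (Continuous.intervalIntegrable (by fun_prop) _ _) intervalIntegrable_const,
    integral_exp_add_mul hk, intervalIntegral.integral_const]
  field_simp
  ring

theorem integral_mul_exp_add_mul (hk : k ≠ 0) :
    ∫ s in 0..1, s * exp (A + s * k) = ((k - 1) * exp (A + k) + exp A) / k ^ 2 := by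
  have hderiv : ∀ s ∈ uIcc (0 : ℝ) 1,
      HasDerivAt (fun s => (s * k - 1) * exp (A + s * k) / k ^ 2) (s * exp (A + s * k)) s := by
    intro s _
    have hlin : HasDerivAt (fun s => s * k) k s := by simpa using (hasDerivAt_id s).mul_const k
    refine (((hlin.sub_const 1).mul (hlin.const_add A).exp).div_const (k ^ 2)).congr_deriv ?_
    field_simp
    ring
  rw [integral_eq_sub_of_hasDerivAt hderiv (Continuous.intervalIntegrable (by fun_prop) _ _)]
  simp only [one_mul, zero_mul, zero_sub, add_zero]
  ring

end ExpIntegrals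

theorem integral_simplex_exp {p q : ℝ} (hp : p ≠ 0) (hq : q ≠ 0) (hpq : p + q ≠ 0) (A : ℝ) :
    ∫ t₀ in 0..1, ∫ t₁ in 0..t₀, ∫ t₂ in 0..t₁, exp (A + t₀ * p + t₂ * q)
      = ((exp (A + (p + q)) - exp A) / (p + q) - (exp (A + p) - exp A) / p
          - q * (((p - 1) * exp (A + p) + exp A) / p ^ 2)) / q ^ 2 := by
  simp_rw [integral_integral_exp_add_mul hq, add_assoc, ← mul_add]
  rw [intervalIntegral.integral_div, intervalIntegral.integral_sub, intervalIntegral.integral_sub,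
    intervalIntegral.integral_const_mul, integral_exp_add_mul hpq, integral_exp_add_mul hp,
    integral_mul_exp_add_mul hp]
  · simp only [one_mul]
  all_goals exact Continuous.intervalIntegrable (by fun_prop) _ _

theorem dd1_of_ne {x y : ℝ} (h : x ≠ y) : dd1 x y = (exp y - exp x) / (y - x) := by
  rw [dd1, if_neg h, ← neg_div_neg_eq, neg_sub, neg_sub]

theorem hxy_self (x : ℝ) : hxy x x = 0 := by
  simp only [hxy, dd1, if_true]
  ring

theorem sub_mul_sub_mul_expDD {a b c : ℝ} (hab : a ≠ b) (hbc : b ≠ c) (hac : a ≠ c) :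
    (b - a) * (c - b) * expDD ![a, b, b, c] = dd1 a b + dd1 b c - dd1 a c - exp b := by
  have hp : b - a ≠ 0 := sub_ne_zero.2 hab.symm
  have hq : c - b ≠ 0 := sub_ne_zero.2 hbc.symm
  have hpq : b - a + (c - b) ≠ 0 := by rw [sub_add_sub_cancel']; exact sub_ne_zero.2 hac.symm
  rw [expDD_fin_four]
  simp only [Matrix.cons_val, sub_self, mul_zero, add_zero]
  rw [integral_simplex_exp hp hq hpq, dd1_of_ne hab, dd1_of_ne hbc, dd1_of_ne hac,
    add_sub_cancel, sub_add_sub_cancel', add_sub_cancel]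
  field_simp
  ring

theorem hxy_sub_hxy_sub_hxy {a b c : ℝ} (hac : a ≠ c) :
    hxy a c - hxy a b - hxy b c = 2 * (b - a) * (c - b) * expDD ![a, b, b, c] := by
  rcases eq_or_ne a b with rfl | hab
  · simp [hxy_self]
  rcases eq_or_ne b c with rfl | hbc
  · simp [hxy_self]
  have key := sub_mul_sub_mul_expDD hab hbc hac
  unfold hxy
  linear_combination (-2) * key

theorem expDD_nonneg {n : ℕ} (x : Fin (n + 1) → ℝ) : 0 ≤ expDD x :=
  integral_nonneg fun _ => (exp_pos _).le

theorem stmt8 (a b c : ℝ) (hab : a ≤ b) (hbc : b ≤ c) :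
    hxy a b + hxy b c ≤ hxy a c ∧
    hxy a c - hxy a b - hxy b c = 2 * (b - a) * (c - b) * expDD ![a, b, b, c] ∧
    0 ≤ 2 * (b - a) * (c - b) * expDD ![a, b, b, c] := by
  have hdefect : hxy a c - hxy a b - hxy b c = 2 * (b - a) * (c - b) * expDD ![a, b, b, c] := by
    rcases eq_or_ne a c with rfl | hac
    · obtain rfl : b = a := le_antisymm hbc hab
      simp [hxy_self]
    · exact hxy_sub_hxy_sub_hxy hac
  have hnonneg : 0 ≤ 2 * (b - a) * (c - b) * expDD ![a, b, b, c] :=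
    mul_nonneg (mul_nonneg (mul_nonneg zero_le_two (sub_nonneg.2 hab)) (sub_nonneg.2 hbc))
      (expDD_nonneg _)
  exact ⟨by linarith, hdefect, hnonneg⟩
end

section
/- Let φ(u) = cosh u − (sinh u)/u with φ(0) = 0. Then for all x, y, z ≥ 0: φ(x+y)·φ(y+z) ≥ φ(x)·φ(z) + φ(y)·φ(x+y+z). -/
open MeasureTheory Real Filter Finset Asymptotics

/-!
Put `F t = φ (x + t) * φ (t + z) - φ t * φ (x + t + z)`; since `φ 0 = 0`, `F 0 = φ x * φ z`, so it
suffices that `F` is nondecreasing on `[0, ∞)`. With `c = x + 2t + z` and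
`N u = φ' u * φ (c - u) + φ u * φ' (c - u)` one has `F' t = N (x + t) - N t`. The equation
`φ'' = q φ` with `q u = 1 + 2 / u²` gives `N' u = (q u - q (c - u)) * φ u * φ (c - u)`, which is
`≥ 0` for `u ≤ c / 2` because `q` decreases and `φ ≥ 0`. As `N` is symmetric about `c / 2`, this
yields `N t ≤ N (x + t)`. The argument works for any nonnegative solution of `f'' = q f` with `q`
decreasing on `(0, ∞)`.
-/

open Set Topology

section ProductInequality

variable {f f' q : ℝ → ℝ}

/-- `prodDiagDeriv f f' a b` is the derivative of `t ↦ f (a + t) * f (b + t)` at `t = 0`. -/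
def prodDiagDeriv (f f' : ℝ → ℝ) (a b : ℝ) : ℝ := f' a * f b + f a * f' b

lemma hasDerivAt_prodDiagDeriv_sub (hf : ∀ u, 0 < u → HasDerivAt f (f' u) u)
    (hf' : ∀ u, 0 < u → HasDerivAt f' (q u * f u) u) {c u : ℝ} (hu : 0 < u) (hcu : u < c) :
    HasDerivAt (fun v => prodDiagDeriv f f' v (c - v))
      ((q u - q (c - u)) * (f u * f (c - u))) u := by
  have hsub : HasDerivAt (fun v : ℝ => c - v) (-1) u := by
    simpa using (hasDerivAt_id u).const_sub c
  have h := ((hf' u hu).mul ((hf (c - u) (by linarith)).comp u hsub)).add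
    ((hf u hu).mul ((hf' (c - u) (by linarith)).comp u hsub))
  exact h.congr_deriv (by simp only [Function.comp_apply]; ring)

lemma monotoneOn_prodDiagDeriv_sub (hf : ∀ u, 0 < u → HasDerivAt f (f' u) u)
    (hf' : ∀ u, 0 < u → HasDerivAt f' (q u * f u) u) (hq : AntitoneOn q (Ioi 0))
    (hf_nonneg : ∀ u, 0 < u → 0 ≤ f u) (c : ℝ) :
    MonotoneOn (fun u => prodDiagDeriv f f' u (c - u)) (Ioc 0 (c / 2)) := by
  have hderiv : ∀ u ∈ Ioc 0 (c / 2), HasDerivAt (fun v => prodDiagDeriv f f' v (c - v))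
      ((q u - q (c - u)) * (f u * f (c - u))) u := fun u hu =>
    hasDerivAt_prodDiagDeriv_sub hf hf' hu.1 (by linarith [hu.1, hu.2])
  refine monotoneOn_of_hasDerivWithinAt_nonneg (convex_Ioc 0 (c / 2))
    (fun u hu => (hderiv u hu).continuousAt.continuousWithinAt)
    (fun u hu => (hderiv u (interior_subset hu)).hasDerivWithinAt) fun u hu => ?_
  rw [interior_Ioc] at hu
  have hcu : 0 < c - u := by linarith [hu.1, hu.2]
  have hq_le : q (c - u) ≤ q u := hq hu.1 hcu (by linarith [hu.2])
  exact mul_nonneg (sub_nonneg.2 hq_le) (mul_nonneg (hf_nonneg u hu.1) (hf_nonneg _ hcu))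

lemma prodDiagDeriv_le (hf : ∀ u, 0 < u → HasDerivAt f (f' u) u)
    (hf' : ∀ u, 0 < u → HasDerivAt f' (q u * f u) u) (hq : AntitoneOn q (Ioi 0))
    (hf_nonneg : ∀ u, 0 < u → 0 ≤ f u) {a b t : ℝ} (ht : 0 < t) (hta : t ≤ a) (htb : t ≤ b) :
    prodDiagDeriv f f' t (a + b - t) ≤ prodDiagDeriv f f' a b := by
  have hmono := monotoneOn_prodDiagDeriv_sub hf hf' hq hf_nonneg (a + b)
  have hsymm : prodDiagDeriv f f' b a = prodDiagDeriv f f' a b := by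
    unfold prodDiagDeriv; ring
  rcases le_total a b with hab | hab
  · simpa using hmono ⟨ht, by linarith⟩ ⟨ht.trans_le hta, by linarith⟩ hta
  · simpa [hsymm] using hmono ⟨ht, by linarith⟩ ⟨ht.trans_le htb, by linarith⟩ htb

theorem monotoneOn_shift_mul_sub_mul (hcont : ContinuousOn f (Ici 0))
    (hf : ∀ u, 0 < u → HasDerivAt f (f' u) u)
    (hf' : ∀ u, 0 < u → HasDerivAt f' (q u * f u) u) (hq : AntitoneOn q (Ioi 0))
    (hf_nonneg : ∀ u, 0 < u → 0 ≤ f u) {x z : ℝ} (hx : 0 ≤ x) (hz : 0 ≤ z) :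
    MonotoneOn (fun t => f (x + t) * f (t + z) - f t * f (x + t + z)) (Ici 0) := by
  have hshift : ∀ a, 0 ≤ a → ContinuousOn (fun t => f (a + t)) (Ici 0) := fun a ha =>
    hcont.comp (by fun_prop) fun t (ht : 0 ≤ t) => show 0 ≤ a + t by linarith
  have hderiv : ∀ t, 0 < t → HasDerivAt (fun t => f (x + t) * f (t + z) - f t * f (x + t + z))
      (prodDiagDeriv f f' (x + t) (t + z) - prodDiagDeriv f f' t (x + t + z)) t := by
    intro t ht
    have hxt := (hf (x + t) (by linarith)).comp t ((hasDerivAt_id' t).const_add x)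
    have htz := (hf (t + z) (by linarith)).comp t ((hasDerivAt_id' t).add_const z)
    have hxtz := (hf (x + t + z) (by linarith)).comp t (((hasDerivAt_id' t).const_add x).add_const z)
    have h := (hxt.mul htz).sub ((hf t ht).mul hxtz)
    exact h.congr_deriv (by simp only [prodDiagDeriv, Function.comp_apply]; ring)
  refine monotoneOn_of_hasDerivWithinAt_nonneg (convex_Ici 0)
    (f' := fun t => prodDiagDeriv f f' (x + t) (t + z) - prodDiagDeriv f f' t (x + t + z))
    ?_ (fun t ht => ?_) fun t ht => ?_
  · have h := ((hshift x hx).mul (hshift z hz)).sub (hcont.mul (hshift (x + z) (by linarith)))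
    refine h.congr fun t _ => ?_
    simp only [Pi.sub_apply, Pi.mul_apply, add_comm t z, add_right_comm x t z]
  · rw [interior_Ici] at ht
    exact (hderiv t ht).hasDerivWithinAt
  · rw [interior_Ici] at ht
    have h := prodDiagDeriv_le hf hf' hq hf_nonneg ht (a := x + t) (b := t + z)
      (by linarith) (by linarith)
    rw [show x + t + (t + z) - t = x + t + z by ring] at h
    exact sub_nonneg.2 h

end ProductInequality

noncomputable def phiDeriv (u : ℝ) : ℝ := sinh u - cosh u / u + sinh u / u ^ 2

lemma phi_zero : phi 0 = 0 := if_pos rfl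

lemma phi_of_ne_zero {u : ℝ} (hu : u ≠ 0) : phi u = cosh u - sinh u / u := if_neg hu

lemma phi_eventuallyEq {u : ℝ} (hu : u ≠ 0) : phi =ᶠ[𝓝 u] fun v => cosh v - sinh v / v :=
  eventually_of_mem (isOpen_ne.mem_nhds hu) fun _ hv => phi_of_ne_zero hv

lemma sinh_le_mul_cosh {u : ℝ} (hu : 0 ≤ u) : sinh u ≤ u * cosh u := by
  have hderiv : ∀ v, HasDerivAt (fun v => v * cosh v - sinh v) (v * sinh v) v := fun v =>
    (((hasDerivAt_id' v).mul (hasDerivAt_cosh v)).sub (hasDerivAt_sinh v)).congr_deriv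
      (by ring)
  have hmono : MonotoneOn (fun v => v * cosh v - sinh v) (Ici 0) :=
    monotoneOn_of_hasDerivWithinAt_nonneg (convex_Ici 0)
      (fun v _ => (hderiv v).continuousAt.continuousWithinAt)
      (fun v _ => (hderiv v).hasDerivWithinAt) fun v hv => by
        rw [interior_Ici] at hv
        exact mul_nonneg (le_of_lt hv) (sinh_nonneg_iff.2 (le_of_lt hv))
  simpa using hmono self_mem_Ici hu hu

lemma phi_nonneg {u : ℝ} (hu : 0 ≤ u) : 0 ≤ phi u := by
  rcases hu.eq_or_lt with rfl | hu
  · exact phi_zero.ge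
  rw [phi_of_ne_zero hu.ne', sub_nonneg, div_le_iff₀ hu, mul_comm]
  exact sinh_le_mul_cosh hu.le

lemma phi_le_cosh_sub_one {u : ℝ} (hu : 0 ≤ u) : phi u ≤ cosh u - 1 := by
  rcases hu.eq_or_lt with rfl | hu
  · simp [phi_zero]
  rw [phi_of_ne_zero hu.ne']
  have : 1 ≤ sinh u / u := (one_le_div₀ hu).2 (self_le_sinh_iff.2 hu.le)
  linarith

lemma continuousOn_phi : ContinuousOn phi (Ici 0) := by
  intro u hu
  rcases (mem_Ici.1 hu).eq_or_lt with rfl | hu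
  · have hcosh : Tendsto (fun v => cosh v - 1) (𝓝[≥] 0) (𝓝 0) :=
      ((continuous_cosh.sub continuous_const).tendsto' 0 0 (by simp)).mono_left
        nhdsWithin_le_nhds
    rw [ContinuousWithinAt, phi_zero]
    exact squeeze_zero' (eventually_nhdsWithin_of_forall fun v hv => phi_nonneg hv)
      (eventually_nhdsWithin_of_forall fun v hv => phi_le_cosh_sub_one hv) hcosh
  · refine ContinuousAt.continuousWithinAt (ContinuousAt.congr ?_ (phi_eventuallyEq hu.ne').symm)
    exact continuous_cosh.continuousAt.sub (continuous_sinh.continuousAt.div continuousAt_id hu.ne')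

lemma hasDerivAt_phi {u : ℝ} (hu : u ≠ 0) : HasDerivAt phi (phiDeriv u) u := by
  refine HasDerivAt.congr_of_eventuallyEq ?_ (phi_eventuallyEq hu)
  refine ((hasDerivAt_cosh u).sub ((hasDerivAt_sinh u).div (hasDerivAt_id' u) hu)).congr_deriv ?_
  simp only [phiDeriv]
  field_simp
  ring

lemma hasDerivAt_phiDeriv {u : ℝ} (hu : u ≠ 0) :
    HasDerivAt phiDeriv ((1 + 2 / u ^ 2) * phi u) u := by
  have h := ((hasDerivAt_sinh u).sub ((hasDerivAt_cosh u).div (hasDerivAt_id' u) hu)).add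
    ((hasDerivAt_sinh u).div (hasDerivAt_pow 2 u) (pow_ne_zero 2 hu))
  refine h.congr_deriv ?_
  rw [phi_of_ne_zero hu]
  field_simp
  ring

lemma antitoneOn_one_add_two_div_sq : AntitoneOn (fun u : ℝ => 1 + 2 / u ^ 2) (Ioi 0) :=
  fun u hu v _ huv => by
    have hu : 0 < u := hu
    dsimp only
    gcongr

theorem stmt9 (x y z : ℝ) (hx : 0 ≤ x) (hy : 0 ≤ y) (hz : 0 ≤ z) :
    phi x * phi z + phi y * phi (x + y + z) ≤ phi (x + y) * phi (y + z) := by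
  have h := monotoneOn_shift_mul_sub_mul continuousOn_phi (fun u hu => hasDerivAt_phi hu.ne')
    (fun u hu => hasDerivAt_phiDeriv hu.ne') antitoneOn_one_add_two_div_sq
    (fun u hu => phi_nonneg hu.le) hx hz self_mem_Ici hy hy
  simp only [add_zero, zero_add, phi_zero, zero_mul, sub_zero] at h
  linarith
end

section
/- The map y ↦ n!·exp[y₀,…,yₙ] on ℝ^{n+1} is symmetric and convex, hence Schur-convex; in particular if y majorizes z then n!·exp[y₀,…,yₙ] ≥ n!·exp[z₀,…,zₙ]. -/
open MeasureTheory Real Filter Finset Asymptotics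

/-!
The substitution `t_j = s_j + ⋯ + s_{n-1}` (unimodular, upper triangular) turns the integral over
the ordered cube defining `expDD y` into `∫ exp ⟪λ, y⟫` over the solid simplex, where
`λ = (1 - ∑ s, s)` are barycentric coordinates. Replacing `s_k` by `1 - ∑ s` is an affine
involution of the simplex with determinant `-1` that swaps `λ_0` and `λ_{k+1}`; these
transpositions generate the symmetric group, so `expDD` is symmetric. Convexity holds pointwise
under the integral. If `y` majorizes `z`, then `z` lies in the convex hull of the permutations of
`y`: otherwise a separating functional `c` would give `⟪c, z⟫ > ⟪c, y ∘ σ⟫` for all `σ`, which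
Abel summation against `c` sorted decreasingly rules out. A convex function attains its maximum on
that hull at a vertex, where `expDD` takes the value `expDD y`.
-/

open Matrix

theorem convexOn_setIntegral_exp_sum_mul {E : Type*} [TopologicalSpace E] [T2Space E]
    [MeasurableSpace E] [OpensMeasurableSpace E] {μ : Measure E} [IsFiniteMeasureOnCompacts μ]
    {K : Set E} (hK : IsCompact K) {m : ℕ} {w : E → Fin m → ℝ} (hw : Continuous w) :
    ConvexOn ℝ Set.univ fun y : Fin m → ℝ => ∫ t in K, rexp (∑ i, w t i * y i) ∂μ := by
  have hint (y : Fin m → ℝ) : IntegrableOn (fun t => rexp (∑ i, w t i * y i)) K μ :=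
    (by fun_prop : Continuous fun t => rexp (∑ i, w t i * y i)).continuousOn
      |>.integrableOn_compact hK
  refine ⟨convex_univ, fun y _ z _ a b ha hb hab => ?_⟩
  have hlin (t : E) : ∑ i, w t i * (a • y + b • z) i =
      a * ∑ i, w t i * y i + b * ∑ i, w t i * z i := by
    simp only [Pi.add_apply, Pi.smul_apply, smul_eq_mul, mul_sum, ← sum_add_distrib]
    exact sum_congr rfl fun i _ => by ring
  calc ∫ t in K, rexp (∑ i, w t i * (a • y + b • z) i) ∂μ
      ≤ ∫ t in K, (a * rexp (∑ i, w t i * y i) + b * rexp (∑ i, w t i * z i)) ∂μ := by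
        refine setIntegral_mono_on (hint _) (((hint y).const_mul a).add ((hint z).const_mul b))
          hK.measurableSet fun t _ => ?_
        rw [hlin]
        exact convexOn_exp.2 (Set.mem_univ _) (Set.mem_univ _) ha hb hab
    _ = a • ∫ t in K, rexp (∑ i, w t i * y i) ∂μ +
          b • ∫ t in K, rexp (∑ i, w t i * z i) ∂μ := by
        rw [integral_add ((hint y).const_mul a) ((hint z).const_mul b), integral_const_mul,
          integral_const_mul, smul_eq_mul, smul_eq_mul]

section Simplex

variable {n : ℕ}

theorem setIntegral_image_affine {f : (Fin n → ℝ) → Fin n → ℝ} {A : Matrix (Fin n) (Fin n) ℝ}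
    {c : Fin n → ℝ} (hf : ∀ x, f x = c + A *ᵥ x) (hA : |A.det| = 1) {s : Set (Fin n → ℝ)}
    (hs : MeasurableSet s) (g : (Fin n → ℝ) → ℝ) :
    ∫ x in f '' s, g x = ∫ x in s, g (f x) := by
  set L := LinearMap.toContinuousLinearMap (toLin' A)
  have hfL : f = fun x => c + L x := funext fun x => by simp [hf, L, toLin'_apply]
  have hinj : Function.Injective f := by
    rw [hfL]
    refine fun x y hxy => (mulVec_injective_iff_isUnit.2 ?_) (add_left_cancel hxy)
    exact (isUnit_iff_isUnit_det A).2 (isUnit_iff_ne_zero.2 fun h => by simp [h] at hA)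
  rw [integral_image_eq_integral_abs_det_fderiv_smul volume hs
    (fun x _ => (hfL ▸ (L.hasFDerivAt.const_add c)).hasFDerivWithinAt) hinj.injOn g]
  simp [L, ContinuousLinearMap.det, LinearMap.det_toLin', hA]

def solidSimplex (n : ℕ) : Set (Fin n → ℝ) := {s | (∀ i, 0 ≤ s i) ∧ ∑ i, s i ≤ 1}

def orderedCube (n : ℕ) : Set (Fin n → ℝ) :=
  {t | (∀ i, 0 ≤ t i ∧ t i ≤ 1) ∧ ∀ i j : Fin n, i ≤ j → t j ≤ t i}

theorem isCompact_solidSimplex : IsCompact (solidSimplex n) := by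
  refine (isCompact_univ_pi fun _ => isCompact_Icc (a := (0 : ℝ)) (b := 1)).of_isClosed_subset
    ?_ fun s hs i _ => ⟨hs.1 i, (single_le_sum (fun j _ => hs.1 j) (mem_univ i)).trans hs.2⟩
  have : solidSimplex n = (⋂ i, {s | 0 ≤ s i}) ∩ {s | ∑ i, s i ≤ 1} := by
    ext; simp [solidSimplex]
  rw [this]
  exact (isClosed_iInter fun i => isClosed_le continuous_const (continuous_apply i)).inter
    (isClosed_le (continuous_finsetSum _ fun i _ => continuous_apply i) continuous_const)

def suffixSumMatrix (n : ℕ) : Matrix (Fin n) (Fin n) ℝ :=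
  of fun j k => if j ≤ k then 1 else 0

theorem det_suffixSumMatrix : (suffixSumMatrix n).det = 1 := by
  rw [det_of_isUpperTriangular (M := suffixSumMatrix n) fun i j hij => if_neg (not_le.2 hij)]
  simp [suffixSumMatrix]

theorem suffixSumMatrix_mulVec (s : Fin n → ℝ) (j : Fin n) :
    (suffixSumMatrix n *ᵥ s) j = ∑ k ∈ Ici j, s k := by
  simp [suffixSumMatrix, mulVec, dotProduct, ite_mul, sum_ite, filter_le_eq_Ici]

theorem suffixSum_mem_orderedCube {s : Fin n → ℝ} (hs : s ∈ solidSimplex n) :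
    suffixSumMatrix n *ᵥ s ∈ orderedCube n := by
  have hsub {u v : Finset (Fin n)} (h : u ⊆ v) : ∑ k ∈ u, s k ≤ ∑ k ∈ v, s k :=
    sum_le_sum_of_subset_of_nonneg h fun k _ _ => hs.1 k
  simp only [orderedCube, Set.mem_ofPred_eq, suffixSumMatrix_mulVec]
  exact ⟨fun j => ⟨sum_nonneg fun k _ => hs.1 k, (hsub (subset_univ _)).trans hs.2⟩,
    fun i j hij => hsub (Ici_subset_Ici.2 hij)⟩

theorem exists_suffixSum_eq {t : Fin n → ℝ} (ht : t ∈ orderedCube n) :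
    ∃ s ∈ solidSimplex n, suffixSumMatrix n *ᵥ s = t := by
  cases n with
  | zero => exact ⟨0, by simp [solidSimplex], Subsingleton.elim _ _⟩
  | succ m =>
    set T : Fin (m + 2) → ℝ := Fin.snoc t 0
    set s : Fin (m + 1) → ℝ := fun k => T k.castSucc - T k.succ
    have hs : suffixSumMatrix (m + 1) *ᵥ s = t := by
      ext j
      have hIci : Ici j = Icc j (Fin.last m) := by ext; simp [Fin.le_last]
      rw [suffixSumMatrix_mulVec, hIci]
      have := Fin.sum_Icc_sub (Fin.le_last j) (-T)
      simp only [Pi.neg_apply, neg_sub_neg, Fin.succ_last, Fin.snoc_last, T] at this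
      simpa [s, T] using this
    refine ⟨s, ⟨fun k => ?_, ?_⟩, hs⟩
    · induction k using Fin.lastCases with
      | last => simpa [s, T] using (ht.1 _).1
      | cast i =>
        simp only [s, T, Fin.succ_castSucc, Fin.snoc_castSucc, sub_nonneg]
        exact ht.2 _ _ (Fin.castSucc_le_succ i)
    · have := congrFun hs 0
      rw [suffixSumMatrix_mulVec, show Ici (0 : Fin (m + 1)) = univ by ext; simp] at this
      exact this.trans_le (ht.1 _).2

theorem image_suffixSum_solidSimplex :
    (suffixSumMatrix n *ᵥ ·) '' solidSimplex n = orderedCube n :=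
  Set.Subset.antisymm (Set.image_subset_iff.2 fun _ => suffixSum_mem_orderedCube)
    fun _ ht => exists_suffixSum_eq ht

def barycentric (s : Fin n → ℝ) : Fin (n + 1) → ℝ := Fin.cons (1 - ∑ i, s i) s

noncomputable def expSimplexIntegral (y : Fin (n + 1) → ℝ) : ℝ :=
  ∫ s in solidSimplex n, rexp (∑ i, barycentric s i * y i)

theorem exponent_suffixSum_eq (s : Fin n → ℝ) (y : Fin (n + 1) → ℝ) :
    y 0 + ∑ j, (suffixSumMatrix n *ᵥ s) j * (y j.succ - y j.castSucc) =
      ∑ i, barycentric s i * y i := by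
  have hswap : ∑ j, (suffixSumMatrix n *ᵥ s) j * (y j.succ - y j.castSucc) =
      ∑ k, s k * (y k.succ - y 0) := by
    simp_rw [suffixSumMatrix_mulVec, sum_mul]
    rw [sum_comm' (t' := univ) (s' := Iic) (by simp)]
    simp_rw [← mul_sum, Fin.sum_Iic_sub]
  rw [hswap, Fin.sum_univ_succ]
  simp only [barycentric, Fin.cons_zero, Fin.cons_succ, mul_sub, sub_mul, sum_sub_distrib,
    sum_mul]
  ring

theorem expDD_eq_expSimplexIntegral (y : Fin (n + 1) → ℝ) : expDD y = expSimplexIntegral y := by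
  rw [expDD, expSimplexIntegral, ← orderedCube, ← image_suffixSum_solidSimplex,
    setIntegral_image_affine (c := 0) (fun x => (zero_add _).symm)
      (by rw [det_suffixSumMatrix, abs_one]) isCompact_solidSimplex.isClosed.measurableSet]
  simp_rw [exponent_suffixSum_eq]

def reflect (k : Fin n) (s : Fin n → ℝ) : Fin n → ℝ := Function.update s k (1 - ∑ i, s i)

theorem sum_reflect (k : Fin n) (s : Fin n → ℝ) : ∑ i, reflect k s i = 1 - s k := by
  rw [reflect, sum_update_of_mem (mem_univ k), sdiff_singleton_eq_erase,
    sum_erase_eq_sub (mem_univ k)]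
  ring

theorem reflect_reflect (k : Fin n) (s : Fin n → ℝ) : reflect k (reflect k s) = s := by
  ext i
  rcases eq_or_ne i k with rfl | hik
  · rw [reflect, Function.update_self, sum_reflect, sub_sub_cancel]
  · simp [reflect, Function.update_of_ne hik]

theorem reflect_mem_solidSimplex (k : Fin n) {s : Fin n → ℝ} (hs : s ∈ solidSimplex n) :
    reflect k s ∈ solidSimplex n := by
  refine ⟨fun i => ?_, by rw [sum_reflect]; linarith [hs.1 k]⟩
  rcases eq_or_ne i k with rfl | hik
  · simpa [reflect] using hs.2
  · simpa [reflect, Function.update_of_ne hik] using hs.1 i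

theorem image_reflect_solidSimplex (k : Fin n) : reflect k '' solidSimplex n = solidSimplex n :=
  Set.Subset.antisymm (Set.image_subset_iff.2 fun _ => reflect_mem_solidSimplex k)
    fun s hs => ⟨reflect k s, reflect_mem_solidSimplex k hs, reflect_reflect k s⟩

def reflectMatrix (k : Fin n) : Matrix (Fin n) (Fin n) ℝ :=
  (1 : Matrix _ _ ℝ).updateRow k fun _ => -1

theorem det_reflectMatrix (k : Fin n) : (reflectMatrix k).det = -1 := by
  have : (fun _ => (-1 : ℝ)) = ∑ j, (-1 : ℝ) • (1 : Matrix (Fin n) (Fin n) ℝ) j := by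
    ext; simp [one_apply]
  rw [reflectMatrix, this, det_updateRow_sum]
  simp

theorem reflect_eq_affine (k : Fin n) (s : Fin n → ℝ) :
    reflect k s = Pi.single k 1 + reflectMatrix k *ᵥ s := by
  ext i
  rcases eq_or_ne i k with rfl | hik
  · simp [reflect, reflectMatrix, mulVec, dotProduct]
    ring
  · simp [reflect, reflectMatrix, mulVec, dotProduct, hik, one_apply]

theorem barycentric_reflect (k : Fin n) (s : Fin n → ℝ) :
    barycentric (reflect k s) = barycentric s ∘ Equiv.swap 0 k.succ := by
  ext i
  induction i using Fin.cases with
  | zero => simp [barycentric, sum_reflect]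
  | succ i =>
    rcases eq_or_ne i k with rfl | hik
    · simp [barycentric, reflect]
    · rw [Function.comp_apply, Equiv.swap_apply_of_ne_of_ne (Fin.succ_ne_zero i)
        ((Fin.succ_injective _).ne hik)]
      simp [barycentric, reflect, Function.update_of_ne hik]

theorem expSimplexIntegral_comp_swap_zero (k : Fin n) (y : Fin (n + 1) → ℝ) :
    expSimplexIntegral (y ∘ Equiv.swap 0 k.succ) = expSimplexIntegral y := by
  conv_rhs => rw [expSimplexIntegral, ← image_reflect_solidSimplex k,
    setIntegral_image_affine (reflect_eq_affine k) (by rw [det_reflectMatrix, abs_neg, abs_one])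
      isCompact_solidSimplex.isClosed.measurableSet]
  refine setIntegral_congr_fun isCompact_solidSimplex.isClosed.measurableSet fun s _ => ?_
  rw [barycentric_reflect, ← Equiv.sum_comp (Equiv.swap 0 k.succ)]
  simp [Equiv.swap_apply_self]

theorem expSimplexIntegral_comp_swap (a b : Fin (n + 1)) (y : Fin (n + 1) → ℝ) :
    expSimplexIntegral (y ∘ Equiv.swap a b) = expSimplexIntegral y := by
  rcases eq_or_ne a b with rfl | hab
  · simp
  rcases Fin.eq_zero_or_eq_succ a with rfl | ⟨i, rfl⟩
  · obtain ⟨k, rfl⟩ := Fin.exists_succ_eq.2 hab.symm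
    exact expSimplexIntegral_comp_swap_zero k y
  rcases Fin.eq_zero_or_eq_succ b with rfl | ⟨j, rfl⟩
  · rw [Equiv.swap_comm]; exact expSimplexIntegral_comp_swap_zero i y
  have hconj : Equiv.swap i.succ j.succ =
      Equiv.swap 0 i.succ * Equiv.swap 0 j.succ * Equiv.swap 0 i.succ := by
    rw [Equiv.swap_comm 0 j.succ, Equiv.swap_mul_swap_mul_swap (Fin.succ_ne_zero j) hab.symm]
  simp only [hconj, Equiv.Perm.coe_mul, ← Function.comp_assoc,
    expSimplexIntegral_comp_swap_zero]

theorem expSimplexIntegral_comp_perm (σ : Equiv.Perm (Fin (n + 1))) (y : Fin (n + 1) → ℝ) :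
    expSimplexIntegral (y ∘ σ) = expSimplexIntegral y := by
  induction σ using Equiv.Perm.swap_induction_on generalizing y with
  | one => rfl
  | swap_mul f a b _ ih =>
    rw [Equiv.Perm.coe_mul, ← Function.comp_assoc, ih, expSimplexIntegral_comp_swap]

theorem expDD_comp_perm (σ : Equiv.Perm (Fin (n + 1))) (y : Fin (n + 1) → ℝ) :
    expDD (y ∘ σ) = expDD y := by
  simp only [expDD_eq_expSimplexIntegral, expSimplexIntegral_comp_perm]

end Simplex

theorem convexOn_expDD (n : ℕ) : ConvexOn ℝ Set.univ (expDD (n := n)) := by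
  have hw : Continuous (barycentric (n := n)) := by
    unfold barycentric; fun_prop
  rw [funext expDD_eq_expSimplexIntegral]
  exact convexOn_setIntegral_exp_sum_mul isCompact_solidSimplex hw

section Majorization
variable {m : ℕ}

theorem sum_le_topSum (y : Fin m → ℝ) (S : Finset (Fin m)) : ∑ i ∈ S, y i ≤ topSum #S y := by
  refine le_csSup ((Set.finite_range fun T : Finset (Fin m) => ∑ i ∈ T, y i).subset ?_).bddAbove
    ⟨S, rfl, rfl⟩
  rintro _ ⟨T, -, rfl⟩
  exact ⟨T, rfl⟩

theorem topSum_le {k : ℕ} (hk : k ≤ m) (y : Fin m → ℝ) {a : ℝ}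
    (h : ∀ S : Finset (Fin m), #S = k → ∑ i ∈ S, y i ≤ a) : topSum k y ≤ a := by
  obtain ⟨S, -, hS⟩ := exists_subset_card_eq (s := (univ : Finset (Fin m))) (by simpa using hk)
  refine csSup_le ⟨_, S, hS, rfl⟩ ?_
  rintro _ ⟨T, hT, rfl⟩
  exact h T hT

theorem sum_le_sum_Iic_of_antitone {w : Fin m → ℝ} (hw : Antitone w) {S : Finset (Fin m)}
    {k : Fin m} (hS : #S = k + 1) : ∑ i ∈ S, w i ≤ ∑ i ∈ Iic k, w i := by
  rw [← sum_sdiff_le_sum_sdiff]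
  calc ∑ i ∈ S \ Iic k, w i ≤ #(S \ Iic k) • w k :=
        sum_le_card_nsmul _ _ _ fun i hi => hw (le_of_lt (by simpa using (mem_sdiff.1 hi).2))
    _ = #(Iic k \ S) • w k := by rw [card_sdiff_comm (hS.trans (Fin.card_Iic k).symm)]
    _ ≤ ∑ i ∈ Iic k \ S, w i :=
        card_nsmul_le_sum _ _ _ fun i hi => hw (mem_Iic.1 (mem_sdiff.1 hi).1)

theorem exists_perm_antitone (y : Fin m → ℝ) : ∃ σ : Equiv.Perm (Fin m), Antitone (y ∘ σ) :=
  ⟨Tuple.sort (OrderDual.toDual ∘ y), Tuple.monotone_sort (OrderDual.toDual ∘ y)⟩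

theorem sum_mul_le_mul_sum_of_antitone {c d : Fin (m + 1) → ℝ} (hc : Antitone c)
    (hd : ∀ k, ∑ i ∈ Iic k, d i ≤ 0) : ∑ i, c i * d i ≤ c (Fin.last m) * ∑ i, d i := by
  induction m with
  | zero => simp
  | succ m ih =>
    have hinit := ih (hc.comp_monotone Fin.strictMono_castSucc.monotone)
      fun k => by simpa [Fin.sum_Iic_castSucc] using hd k.castSucc
    simp only [Function.comp_apply] at hinit
    have hsum : ∑ i : Fin (m + 1), d i.castSucc ≤ 0 := by
      simpa [Fin.sum_Iic_castSucc, show Iic (Fin.last m) = univ by ext; simp [Fin.le_last]]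
        using hd (Fin.last m).castSucc
    have hlast : c (Fin.last (m + 1)) ≤ c (Fin.last m).castSucc := hc (Fin.castSucc_lt_last _).le
    rw [Fin.sum_univ_castSucc, Fin.sum_univ_castSucc d]
    nlinarith [mul_le_mul_of_nonpos_right hlast hsum]

theorem exists_perm_sum_mul_le {y z : Fin m → ℝ} (hsum : ∑ i, z i = ∑ i, y i)
    (htop : ∀ k, topSum k z ≤ topSum k y) (c : Fin m → ℝ) :
    ∃ σ : Equiv.Perm (Fin m), ∑ i, c i * z i ≤ ∑ i, c i * y (σ i) := by
  rcases m with _ | m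
  · exact ⟨1, by simp⟩
  obtain ⟨τ, hτ⟩ := exists_perm_antitone c
  obtain ⟨ρ, hρ⟩ := exists_perm_antitone y
  have hprefix (k : Fin (m + 1)) : ∑ i ∈ Iic k, (z (τ i) - y (ρ i)) ≤ 0 := by
    rw [sum_sub_distrib, sub_nonpos]
    calc ∑ i ∈ Iic k, z (τ i) = ∑ i ∈ (Iic k).map τ.toEmbedding, z i := by
          rw [sum_map]; rfl
      _ ≤ topSum (k + 1) z := by
        simpa [Fin.card_Iic] using sum_le_topSum z ((Iic k).map τ.toEmbedding)
      _ ≤ topSum (k + 1) y := htop _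
      _ ≤ ∑ i ∈ Iic k, y (ρ i) := topSum_le k.isLt y fun S hS => by
        have hS' : #(S.map ρ.symm.toEmbedding) = k + 1 := by simpa using hS
        calc ∑ i ∈ S, y i = ∑ i ∈ S.map ρ.symm.toEmbedding, y (ρ i) := by simp [sum_map]
          _ ≤ ∑ i ∈ Iic k, y (ρ i) := sum_le_sum_Iic_of_antitone hρ hS'
  have htotal : ∑ i, (z (τ i) - y (ρ i)) = 0 := by
    rw [sum_sub_distrib, Equiv.sum_comp τ z, Equiv.sum_comp ρ y, hsum, sub_self]
  have habel := sum_mul_le_mul_sum_of_antitone hτ hprefix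
  rw [htotal, mul_zero] at habel
  refine ⟨τ.symm.trans ρ, ?_⟩
  calc ∑ i, c i * z i = ∑ i, c (τ i) * z (τ i) := (Equiv.sum_comp τ fun i => c i * z i).symm
    _ ≤ ∑ i, c (τ i) * y (ρ i) := by
      simpa [mul_sub, sum_sub_distrib] using habel
    _ = ∑ i, c i * y ((τ.symm.trans ρ) i) := by
      rw [← Equiv.sum_comp τ fun i => c i * y ((τ.symm.trans ρ) i)]
      simp

theorem mem_convexHull_range_comp_perm {y z : Fin m → ℝ} (hsum : ∑ i, z i = ∑ i, y i)
    (htop : ∀ k, topSum k z ≤ topSum k y) :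
    z ∈ convexHull ℝ (Set.range fun σ : Equiv.Perm (Fin m) => y ∘ σ) := by
  by_contra hz
  obtain ⟨f, u, hfu, hfz⟩ := geometric_hahn_banach_closed_point (convex_convexHull ℝ _)
    ((Set.finite_range _).isCompact_convexHull ℝ).isClosed hz
  set c : Fin m → ℝ := fun i => f fun j => if i = j then 1 else 0
  have hf (w : Fin m → ℝ) : f w = ∑ i, c i * w i := by
    rw [← ContinuousLinearMap.coe_coe, LinearMap.pi_apply_eq_sum_univ]
    simp [c, mul_comm]
  obtain ⟨σ, hσ⟩ := exists_perm_sum_mul_le hsum htop c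
  have := hfu _ (subset_convexHull ℝ _ ⟨σ, rfl⟩)
  rw [hf] at this hfz
  exact lt_asymm hfz (hσ.trans_lt this)

end Majorization

theorem stmt15 (n : ℕ) :
    (∀ (e : Equiv.Perm (Fin (n + 1))) (y : Fin (n + 1) → ℝ), expDD (y ∘ e) = expDD y) ∧
    ConvexOn ℝ Set.univ (fun y : Fin (n + 1) → ℝ => (n.factorial : ℝ) * expDD y) ∧
    (∀ y z : Fin (n + 1) → ℝ, (∑ i, z i = ∑ i, y i) →
      (∀ k, topSum k z ≤ topSum k y) →
      (n.factorial : ℝ) * expDD z ≤ (n.factorial : ℝ) * expDD y) := by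
  have hconv : ConvexOn ℝ Set.univ fun y : Fin (n + 1) → ℝ => (n.factorial : ℝ) * expDD y :=
    (convexOn_expDD n).smul (Nat.cast_nonneg _)
  refine ⟨expDD_comp_perm, hconv, fun y z hsum htop => ?_⟩
  obtain ⟨_, ⟨σ, rfl⟩, hle⟩ := hconv.exists_ge_of_mem_convexHull (Set.subset_univ _)
    (mem_convexHull_range_comp_perm hsum htop)
  rwa [expDD_comp_perm] at hle
end

section
/- The two-level divided difference evaluates as n!·exp[a₀, −a₀/n, …, −a₀/n] = n·e^{a₀}·a^{−n}·γ(n,a), where the node −a₀/n is repeated n times, a = (n+1)a₀/n, and γ is the lower incomplete gamma function. -/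
open MeasureTheory Real Filter Finset Asymptotics

/-! Every node but the first equals `b = -a₀/n`, so in the Hermite–Genocchi integral the exponent
`a₀ + t₀ (b - a₀)` depends only on the first coordinate of the ordered simplex. Integrating out the
other coordinates (a simplex of volume `t₀ⁿ⁻¹/(n-1)!`) leaves
`∫₀¹ e^{a₀ - a x} xⁿ⁻¹/(n-1)! dx` with `a = a₀ - b`, and the substitution `u = a x` turns this
into `e^{a₀} a⁻ⁿ γ(n, a)/(n-1)!`. -/
open scoped Nat

def orderedSimplex (m : ℕ) (c : ℝ) : Set (Fin m → ℝ) :=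
  {t | (∀ i, 0 ≤ t i ∧ t i ≤ c) ∧ ∀ i j : Fin m, i ≤ j → t j ≤ t i}

lemma isClosed_orderedSimplex (m : ℕ) (c : ℝ) : IsClosed (orderedSimplex m c) := by
  simp only [orderedSimplex, Set.ofPred_and, Set.ofPred_forall]
  refine .inter (isClosed_iInter fun i => .inter ?_ ?_)
    (isClosed_iInter fun i => isClosed_iInter fun j => isClosed_iInter fun _ => ?_) <;>
  exact isClosed_le (by fun_prop) (by fun_prop)

lemma isCompact_orderedSimplex (m : ℕ) (c : ℝ) : IsCompact (orderedSimplex m c) :=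
  (isCompact_univ_pi fun _ => isCompact_Icc).of_isClosed_subset (isClosed_orderedSimplex m c)
    fun _ ht => Set.mem_univ_pi.2 fun i => ht.1 i

lemma cons_mem_orderedSimplex {m : ℕ} {c x : ℝ} (y : Fin m → ℝ) :
    Fin.cons x y ∈ orderedSimplex (m + 1) c ↔ x ∈ Set.Icc 0 c ∧ y ∈ orderedSimplex m x := by
  constructor
  · rintro ⟨hbound, hanti⟩
    refine ⟨by simpa using hbound 0, fun j => ⟨by simpa using (hbound j.succ).1,
        by simpa using hanti 0 j.succ (Fin.zero_le _)⟩,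
      fun i j hij => by simpa using hanti i.succ j.succ (Fin.succ_le_succ_iff.2 hij)⟩
  · rintro ⟨⟨hx0, hxc⟩, hbound, hanti⟩
    refine ⟨Fin.cases (by simpa using ⟨hx0, hxc⟩)
      fun j => by simpa using ⟨(hbound j).1, (hbound j).2.trans hxc⟩, fun i j hij => ?_⟩
    cases j using Fin.cases with
    | zero => rw [Fin.le_zero_iff.mp hij]
    | succ j =>
      cases i using Fin.cases with
      | zero => simpa using (hbound j).2
      | succ i => simpa using hanti i j (Fin.succ_le_succ_iff.mp hij)

lemma setIntegral_orderedSimplex_succ (m : ℕ) (c : ℝ) {f : ℝ → ℝ} (hf : Continuous f) :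
    ∫ t in orderedSimplex (m + 1) c, f (t 0) =
      ∫ x in Set.Icc 0 c, f x * volume.real (orderedSimplex m x) := by
  set e := MeasurableEquiv.piFinSuccAbove (fun _ : Fin (m + 1) => ℝ) 0
  have he : MeasurePreserving e.symm :=
    (volume_preserving_piFinSuccAbove (fun _ : Fin (m + 1) => ℝ) 0).symm e
  have he_apply (x : ℝ) (y : Fin m → ℝ) : e.symm (x, y) = Fin.cons x y := by
    simp [e, Fin.consEquiv]
  have hS := (isClosed_orderedSimplex (m + 1) c).measurableSet
  set F := (orderedSimplex (m + 1) c).indicator fun t => f (t 0)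
  have hF : Integrable F := (integrable_indicator_iff hS).2 <|
    (hf.comp (continuous_apply 0)).continuousOn.integrableOn_compact
      (isCompact_orderedSimplex _ _)
  have hFe : Integrable (fun p => F (e.symm p)) ((volume : Measure ℝ).prod volume) := by
    rw [← Measure.volume_eq_prod]
    exact (he.integrable_comp_emb e.symm.measurableEmbedding).2 hF
  have hslice (x : ℝ) : ∫ y, F (e.symm (x, y)) =
      (Set.Icc 0 c).indicator (fun x => f x * volume.real (orderedSimplex m x)) x := by
    have hpre : (fun y => F (e.symm (x, y))) =
        {y | Fin.cons x y ∈ orderedSimplex (m + 1) c}.indicator fun _ => f x := by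
      ext y
      by_cases hy : Fin.cons x y ∈ orderedSimplex (m + 1) c <;> simp [F, hy, he_apply]
    by_cases hx : x ∈ Set.Icc 0 c
    · have hset : {y | Fin.cons x y ∈ orderedSimplex (m + 1) c} = orderedSimplex m x := by
        ext y; simp [cons_mem_orderedSimplex, hx]
      rw [hpre, hset, integral_indicator (isClosed_orderedSimplex m x).measurableSet,
        setIntegral_const, Set.indicator_of_mem hx, smul_eq_mul, mul_comm]
    · have hset : {y | Fin.cons x y ∈ orderedSimplex (m + 1) c} = ∅ := by
        ext y; simp [cons_mem_orderedSimplex, hx]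
      simp [hpre, hset, hx]
  calc ∫ t in orderedSimplex (m + 1) c, f (t 0)
      = ∫ p, F (e.symm p) ∂(volume : Measure ℝ).prod volume := by
        rw [← integral_indicator hS, ← he.integral_comp' F]; rfl
    _ = ∫ x in Set.Icc 0 c, f x * volume.real (orderedSimplex m x) := by
        rw [integral_prod _ hFe, integral_congr_ae (ae_of_all _ hslice),
          integral_indicator measurableSet_Icc]

lemma measureReal_orderedSimplex (m : ℕ) {c : ℝ} (hc : 0 ≤ c) :
    volume.real (orderedSimplex m c) = c ^ m / m ! := by
  induction m generalizing c with
  | zero =>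
    have h : orderedSimplex 0 c = Set.univ.pi fun _ => Set.univ := by
      ext t; simp [orderedSimplex]
    simp [h, measureReal_def, volume_pi]
  | succ m ih =>
    have h := setIntegral_orderedSimplex_succ m c (f := fun _ => (1 : ℝ)) continuous_const
    rw [setIntegral_const, smul_eq_mul, mul_one] at h
    rw [h, setIntegral_congr_fun measurableSet_Icc fun x hx => by rw [one_mul, ih hx.1],
      integral_Icc_eq_integral_Ioc, ← intervalIntegral.integral_of_le hc,
      intervalIntegral.integral_div, integral_pow, Nat.factorial_succ]
    push_cast
    field_simp
    ring

lemma setIntegral_orderedSimplex_comp_apply_zero (m : ℕ) {c : ℝ} (hc : 0 ≤ c) {f : ℝ → ℝ}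
    (hf : Continuous f) :
    ∫ t in orderedSimplex (m + 1) c, f (t 0) = ∫ x in 0..c, f x * (x ^ m / m !) := by
  rw [setIntegral_orderedSimplex_succ m c hf, integral_Icc_eq_integral_Ioc,
    intervalIntegral.integral_of_le hc]
  exact setIntegral_congr_fun measurableSet_Ioc fun x hx => by
    rw [measureReal_orderedSimplex m hx.1.le]

lemma expDD_ite_zero (m : ℕ) (a b : ℝ) :
    expDD (fun i : Fin (m + 1 + 1) => if i = 0 then a else b) =
      ∫ x in 0..1, exp (a + x * (b - a)) * (x ^ m / m !) := by
  rw [← setIntegral_orderedSimplex_comp_apply_zero m zero_le_one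
    (f := fun x => exp (a + x * (b - a))) (by fun_prop)]
  refine setIntegral_congr_fun (isClosed_orderedSimplex _ _).measurableSet fun t _ => ?_
  simp [Fin.sum_univ_succ, Fin.succ_ne_zero]

lemma lowerGamma_succ (m : ℕ) (z : ℝ) :
    lowerGamma (m + 1) z = z ^ (m + 1) * ∫ x in 0..1, x ^ m * exp (-(z * x)) := by
  have h := intervalIntegral.smul_integral_comp_mul_left (a := 0) (b := 1)
    (fun t : ℝ => t ^ m * exp (-t)) z
  rw [mul_zero, mul_one] at h
  rw [lowerGamma, Nat.add_sub_cancel, ← h, smul_eq_mul, pow_succ', mul_assoc,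
    ← intervalIntegral.integral_const_mul (z ^ m)]
  simp only [mul_pow, mul_assoc]

theorem stmt17 (n : ℕ) (hn : 1 ≤ n) (a₀ : ℝ) (ha : a₀ ≠ 0) :
    (n.factorial : ℝ) * expDD (fun i : Fin (n + 1) => if i = 0 then a₀ else -a₀ / n)
      = n * Real.exp a₀ * ((n + 1) * a₀ / n) ^ (-(n : ℤ))
          * lowerGamma n ((n + 1) * a₀ / n) := by
  obtain ⟨m, rfl⟩ : ∃ m, n = m + 1 := ⟨n - 1, by omega⟩
  set A : ℝ := ((m + 1 : ℕ) + 1) * a₀ / (m + 1 : ℕ)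
  have hA : A ≠ 0 := by positivity
  have hgap : -a₀ / (m + 1 : ℕ) - a₀ = -A := by
    simp only [A]
    field_simp
    ring
  have hintegrand (x : ℝ) : exp (a₀ + x * (-a₀ / (m + 1 : ℕ) - a₀)) * (x ^ m / m !) =
      exp a₀ / m ! * (x ^ m * exp (-(A * x))) := by
    rw [hgap, mul_neg, mul_comm x, exp_add]
    ring
  rw [expDD_ite_zero, lowerGamma_succ, intervalIntegral.integral_congr fun x _ => hintegrand x,
    intervalIntegral.integral_const_mul, zpow_neg, zpow_natCast, Nat.factorial_succ]
  push_cast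
  field_simp
end
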